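/- arXiv:1103.5878 — 3 statements merged into one kernel-verified Lean document; each statement's English description precedes it below -/
import Mathlib

section
/- Let K be an algebraically closed field, let V be an n-dimensional K-vector space with n ≥ 1, and let T₁, …, T_{r+1} ∈ GL(V) satisfy T₁ ⋯ T_{r+1} = 1. Suppose the subgroup of GL(V) generated by T₁, …, T_{r+1} acts irreducibly on V. Then ∑_{i=1}^{r+1} dim C_{GL(V)}(T_i) ≤ (r−1)·n² + 2, where dim C_{GL(V)}(T_i) denotes the K-dimension of the centralizer of T_i, namely dim_K {X ∈ End_K(V) : X∘T_i = T_i∘X}. -/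
/-- The centralizer of a linear endomorphism `T` of `V` inside `End_K(V)`, as a `K`-submodule:
the space of all `K`-linear endomorphisms `X` of `V` with `X ∘ T = T ∘ X`. -/
def centralizerSubmodule (K : Type*) {V : Type*} [Field K] [AddCommGroup V] [Module K V]
    (T : V →ₗ[K] V) : Submodule K (V →ₗ[K] V) where
  carrier := {X | X ∘ₗ T = T ∘ₗ X}
  add_mem' := by
    intro a b ha hb
    simp only [Set.mem_setOf_eq] at *
    rw [LinearMap.add_comp, LinearMap.comp_add, ha, hb]
  zero_mem' := by
    simp only [Set.mem_setOf_eq, LinearMap.zero_comp, LinearMap.comp_zero]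
  smul_mem' := by
    intro c a ha
    simp only [Set.mem_setOf_eq] at *
    rw [LinearMap.smul_comp, LinearMap.comp_smul, ha]

/-!
Write `E = End V` and `ad T = [T, ·]`, so that the centralizer of `Tᵢ` is `ker (ad Tᵢ)` and the
claim becomes `∑ rank (ad Tᵢ) ≥ 2n² − 2`. With the partial products `pᵢ = T₁ ⋯ Tᵢ`, the maps
`Ψᵢ X = [Tᵢ, pᵢ₊₁⁻¹ X pᵢ] = pᵢ⁻¹ X pᵢ − pᵢ₊₁⁻¹ X pᵢ₊₁` land in `range (ad Tᵢ)` and telescope to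
zero because `p_{r+1} = 1`. So `Ψ = (Ψᵢ)ᵢ` maps `E` into the kernel of the summation map
`S : ∏ range (ad Tᵢ) → E`, whence `∑ rank (ad Tᵢ) ≥ rank S + rank Ψ`.
By Schur's lemma the common centralizer of the `Tᵢ` consists of the scalars. It contains `ker Ψ`,
and also the trace-orthogonal of `range S`, because `tr ([T, Y] Z) = tr (Y [Z, T])`.
Hence both `rank Ψ` and `rank S` are at least `n² − 1`.
-/

open Module

section LinearAlgebra

variable {K : Type*} [Field K]

theorem finrank_range_add_finrank_range_le_of_comp_eq_zero {M N P : Type*} [AddCommGroup M]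
    [Module K M] [AddCommGroup N] [Module K N] [FiniteDimensional K N] [AddCommGroup P]
    [Module K P] (f : M →ₗ[K] N) (g : N →ₗ[K] P) (h : g ∘ₗ f = 0) :
    finrank K (LinearMap.range g) + finrank K (LinearMap.range f) ≤ finrank K N := by
  rw [← LinearMap.finrank_range_add_finrank_ker g]
  exact Nat.add_le_add_left (Submodule.finrank_mono (LinearMap.range_le_ker_iff.mpr h)) _

theorem finrank_toSubmodule_bot_le_one {A : Type*} [Ring A] [Algebra K A] :
    finrank K (Subalgebra.toSubmodule (⊥ : Subalgebra K A)) ≤ 1 := by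
  rw [Algebra.toSubmodule_bot, Submodule.one_eq_span]
  simpa using finrank_span_le_card ({1} : Set A)

variable {V : Type*} [AddCommGroup V] [Module K V] [FiniteDimensional K V]

theorem LinearMap.eq_zero_of_forall_trace_mul_eq_zero {Z : Module.End K V}
    (h : ∀ X, LinearMap.trace K V (X * Z) = 0) : Z = 0 := by
  ext v
  refine (Module.forall_dual_apply_eq_zero_iff K (Z v)).mp fun f => ?_
  rw [← LinearMap.trace_smulRight, ← h (f.smulRight v), LinearMap.trace_mul_comm]
  congr 1
  ext w
  simp

theorem Subalgebra.centralizer_eq_bot_of_irreducible [IsAlgClosed K] [Nontrivial V]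
    {s : Set (Module.End K V)}
    (hirr : ∀ W : Submodule K V, (∀ f ∈ s, ∀ v ∈ W, f v ∈ W) → W = ⊥ ∨ W = ⊤) :
    Subalgebra.centralizer K s = ⊥ := by
  refine eq_bot_iff.mpr fun Z hZ => ?_
  obtain ⟨μ, hμ⟩ := Module.End.exists_eigenvalue Z
  have hinv : ∀ f ∈ s, ∀ v ∈ Module.End.eigenspace Z μ, f v ∈ Module.End.eigenspace Z μ := by
    intro f hf v hv
    rw [Module.End.mem_eigenspace_iff] at hv ⊢
    rw [← Module.End.mul_apply, ← (Subalgebra.mem_centralizer_iff K).mp hZ f hf,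
      Module.End.mul_apply, hv, map_smul]
  obtain h | h := hirr _ hinv
  · exact absurd h hμ
  · refine Algebra.mem_bot.mpr ⟨μ, LinearMap.ext fun v => ?_⟩
    have hv : v ∈ Module.End.eigenspace Z μ := h ▸ Submodule.mem_top
    rw [Module.End.mem_eigenspace_iff] at hv
    simp [hv]

end LinearAlgebra

section Telescope

variable (K : Type*) {A : Type*} [CommRing K] [Ring A] [Algebra K A]

def ad (a : A) : A →ₗ[K] A :=
  LinearMap.mulLeft K a - LinearMap.mulRight K a

@[simp]
theorem ad_apply (a X : A) : ad K a X = a * X - X * a := rfl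

variable {m : ℕ} (t : Fin (m + 1) → Aˣ)

def telescopeTerm (i : Fin (m + 1)) : A →ₗ[K] A :=
  ad K (t i : A) ∘ₗ LinearMap.mulLeft K ↑(Fin.partialProd t i.succ)⁻¹ ∘ₗ
    LinearMap.mulRight K ↑(Fin.partialProd t i.castSucc)

theorem range_telescopeTerm_le (i : Fin (m + 1)) :
    LinearMap.range (telescopeTerm K t i) ≤ LinearMap.range (ad K (t i : A)) :=
  LinearMap.range_comp_le_range _ _

theorem telescopeTerm_apply (X : A) (i : Fin (m + 1)) :
    telescopeTerm K t i X =
      ↑(Fin.partialProd t i.castSucc)⁻¹ * X * ↑(Fin.partialProd t i.castSucc) -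
        ↑(Fin.partialProd t i.succ)⁻¹ * X * ↑(Fin.partialProd t i.succ) := by
  simp [telescopeTerm, Fin.partialProd_succ, mul_assoc]

theorem sum_telescopeTerm_apply (hprod : (List.ofFn t).prod = 1) (X : A) :
    ∑ i, telescopeTerm K t i X = 0 := by
  have hlast : Fin.partialProd t (Fin.last (m + 1)) = 1 := by
    rw [Fin.partialProd, Fin.val_last, List.take_of_length_le (by simp), hprod]
  have htel := Fin.sum_Iic_sub (Fin.last m)
    (fun j => ↑(Fin.partialProd t j)⁻¹ * X * ↑(Fin.partialProd t j))
  rw [← Fin.top_eq_last, Finset.Iic_top] at htel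
  simp_rw [telescopeTerm_apply, Finset.sum_sub_distrib] at htel ⊢
  rw [← neg_sub, htel, Fin.top_eq_last, Fin.succ_last, hlast]
  simp

theorem commute_of_forall_telescopeTerm_apply_eq_zero {X : A}
    (hX : ∀ i, telescopeTerm K t i X = 0) (i : Fin (m + 1)) : Commute X (t i) := by
  have hconst : ∀ j, ↑(Fin.partialProd t j)⁻¹ * X * ↑(Fin.partialProd t j) = X := by
    intro j
    induction j using Fin.induction with
    | zero => simp
    | succ j ih =>
      have h := hX j
      rwa [telescopeTerm_apply, ih, sub_eq_zero, eq_comm] at h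
  have h : ↑(t i)⁻¹ * X * ↑(t i) = X := calc
    ↑(t i)⁻¹ * X * ↑(t i)
      = ↑(t i)⁻¹ * (↑(Fin.partialProd t i.castSucc)⁻¹ * X * ↑(Fin.partialProd t i.castSucc)) *
          ↑(t i) := by rw [hconst]
    _ = ↑(Fin.partialProd t i.succ)⁻¹ * X * ↑(Fin.partialProd t i.succ) := by
      simp [Fin.partialProd_succ, mul_assoc]
    _ = X := hconst _
  rw [mul_assoc, Units.inv_mul_eq_iff_eq_mul] at h
  exact h

end Telescope

section Count

variable {K : Type*} [Field K] {V : Type*} [AddCommGroup V] [Module K V]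

theorem centralizerSubmodule_eq_ker_ad (T : Module.End K V) :
    centralizerSubmodule K T = LinearMap.ker (ad K T) := by
  ext X
  simp [centralizerSubmodule, sub_eq_zero, eq_comm, Module.End.mul_eq_comp]

variable [FiniteDimensional K V]

theorem finrank_le_finrank_add_one_of_range_ad_le {ι : Type*} {t : ι → Module.End K V}
    (hcent : Subalgebra.centralizer K (Set.range t) = ⊥) {W : Submodule K (Module.End K V)}
    (hW : ∀ i, LinearMap.range (ad K (t i)) ≤ W) :
    finrank K (Module.End K V) ≤ finrank K W + 1 := by
  let B : LinearMap.BilinForm K (Module.End K V) :=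
    (LinearMap.mul K _).compr₂ (LinearMap.trace K V)
  have horth : B.orthogonal W ≤
      Subalgebra.toSubmodule (Subalgebra.centralizer K (Set.range t)) := by
    rintro Z hZ _ ⟨i, rfl⟩
    rw [← sub_eq_zero, ← neg_sub]
    refine neg_eq_zero.mpr (LinearMap.eq_zero_of_forall_trace_mul_eq_zero fun X => ?_)
    have h : LinearMap.trace K V (t i * X * Z) - LinearMap.trace K V (X * t i * Z) = 0 := by
      simpa [B, sub_mul] using hZ _ (hW i ⟨X, rfl⟩)
    rw [mul_sub, map_sub, ← h, mul_assoc (t i), LinearMap.trace_mul_comm K (t i)]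
    simp only [mul_assoc]
  have := LinearMap.BilinForm.finrank_add_finrank_orthogonal' (B := B) W
  have h1 := (Submodule.finrank_mono horth).trans (hcent ▸ finrank_toSubmodule_bot_le_one)
  omega

theorem two_mul_finrank_le_sum_finrank_range_ad_add_two {m : ℕ}
    (t : Fin (m + 1) → (Module.End K V)ˣ) (hprod : (List.ofFn t).prod = 1)
    (hcent : Subalgebra.centralizer K (Set.range fun i => (t i : Module.End K V)) = ⊥) :
    2 * finrank K (Module.End K V) ≤
      ∑ i, finrank K (LinearMap.range (ad K (t i : Module.End K V))) + 2 := by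
  let R i := LinearMap.range (ad K (t i : Module.End K V))
  let S : (Π i, R i) →ₗ[K] Module.End K V := ∑ i, (R i).subtype ∘ₗ LinearMap.proj i
  let Ψ : Module.End K V →ₗ[K] Π i, R i := LinearMap.pi fun i =>
    (telescopeTerm K t i).codRestrict (R i) fun X => range_telescopeTerm_le K t i ⟨X, rfl⟩
  have hSΨ : S ∘ₗ Ψ = 0 := LinearMap.ext fun X => by
    simpa [S, Ψ] using sum_telescopeTerm_apply K t hprod X
  have hS : finrank K (Module.End K V) ≤ finrank K (LinearMap.range S) + 1 := by
    refine finrank_le_finrank_add_one_of_range_ad_le hcent fun i Y hY => ⟨Pi.single i ⟨Y, hY⟩, ?_⟩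
    rw [LinearMap.sum_apply, Finset.sum_eq_single i (fun j _ hj => by simp [Pi.single_eq_of_ne hj])
      (by simp)]
    simp
  have hkerΨ : LinearMap.ker Ψ ≤ Subalgebra.toSubmodule
      (Subalgebra.centralizer K (Set.range fun i => (t i : Module.End K V))) := by
    rintro X hX _ ⟨i, rfl⟩
    have hterms : ∀ i, telescopeTerm K t i X = 0 := fun i => congrArg Subtype.val (congrFun hX i)
    exact (commute_of_forall_telescopeTerm_apply_eq_zero K t hterms i).symm.eq
  have hΨ : finrank K (Module.End K V) ≤ finrank K (LinearMap.range Ψ) + 1 := by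
    rw [← LinearMap.finrank_range_add_finrank_ker Ψ]
    have := (Submodule.finrank_mono hkerΨ).trans (hcent ▸ finrank_toSubmodule_bot_le_one)
    omega
  have hSΨrank := finrank_range_add_finrank_range_le_of_comp_eq_zero Ψ S hSΨ
  have hdim : finrank K (Π i, R i) =
      ∑ i, finrank K (LinearMap.range (ad K (t i : Module.End K V))) :=
    Module.finrank_pi_fintype K
  omega

theorem sum_finrank_centralizerSubmodule_le {m : ℕ}
    (t : Fin (m + 1) → (Module.End K V)ˣ) (hprod : (List.ofFn t).prod = 1)
    (hcent : Subalgebra.centralizer K (Set.range fun i => (t i : Module.End K V)) = ⊥) :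
    ∑ i, (finrank K (centralizerSubmodule K (t i : Module.End K V)) : ℤ) ≤
      ((m : ℤ) - 1) * (finrank K V : ℤ) ^ 2 + 2 := by
  have hcount := two_mul_finrank_le_sum_finrank_range_ad_add_two t hprod hcent
  rw [Module.finrank_linearMap] at hcount
  have hrank i : (finrank K (centralizerSubmodule K (t i : Module.End K V)) : ℤ) +
      finrank K (LinearMap.range (ad K (t i : Module.End K V))) = (finrank K V : ℤ) ^ 2 := by
    rw [centralizerSubmodule_eq_ker_ad, add_comm, sq, ← Nat.cast_add, ← Nat.cast_mul,
      LinearMap.finrank_range_add_finrank_ker, Module.finrank_linearMap]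
  have hsum := Finset.sum_congr rfl fun i (_ : i ∈ Finset.univ) => hrank i
  rw [Finset.sum_add_distrib, Finset.sum_const, Finset.card_univ, Fintype.card_fin,
    nsmul_eq_mul] at hsum
  zify at hcount
  push_cast at hsum hcount
  linarith

end Count

/-- **Dimension count.** If `K` is an algebraically closed field, `V` an `n`-dimensional
`K`-vector space with `n ≥ 1`, and `T₁, …, T_{r+1}` are invertible linear maps of `V` whose
product is the identity and which generate an irreducible subgroup of `GL(V)`, then
`∑ᵢ dim C_{GL(V)}(Tᵢ) ≤ (r−1)·n² + 2`, where `dim C_{GL(V)}(Tᵢ)` is the `K`-dimension of the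
space of endomorphisms of `V` commuting with `Tᵢ`. -/
theorem dimension_count (K : Type*) [Field K] [IsAlgClosed K]
    (V : Type*) [AddCommGroup V] [Module K V] [FiniteDimensional K V]
    (n : ℕ) (hn : Module.finrank K V = n) (hn1 : 1 ≤ n)
    (r : ℕ) (T : Fin (r + 1) → (V ≃ₗ[K] V))
    (hprod : (List.ofFn T).prod = 1)
    (hirr : ∀ W : Submodule K V, (∀ i : Fin (r + 1), ∀ v ∈ W, T i v ∈ W) → W = ⊥ ∨ W = ⊤) :
    (∑ i : Fin (r + 1),
        (Module.finrank K (centralizerSubmodule K (T i).toLinearMap) : ℤ))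
      ≤ ((r : ℤ) - 1) * (n : ℤ) ^ 2 + 2 := by
  have : Nontrivial V := Module.nontrivial_of_finrank_pos (R := K) (by omega)
  let t i := (LinearMap.GeneralLinearGroup.generalLinearEquiv K V).symm (T i)
  have htprod : (List.ofFn t).prod = 1 := by
    have : List.ofFn t =
        (List.ofFn T).map (LinearMap.GeneralLinearGroup.generalLinearEquiv K V).symm := by
      rw [List.map_ofFn]; rfl
    rw [this, ← map_list_prod, hprod, map_one]
  have hcent : Subalgebra.centralizer K (Set.range fun i => (t i : Module.End K V)) = ⊥ :=
    Subalgebra.centralizer_eq_bot_of_irreducible fun W hW => hirr W fun i => hW _ ⟨i, rfl⟩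
  exact hn ▸ sum_finrank_centralizerSubmodule_le t htprod hcent
end

section
/- Let G be a group and let g₁, g₂, g₃ ∈ G with g₁g₂g₃ = 1. Assume that the only element of G that commutes with each of g₁, g₂ and g₃ is the identity. Suppose there exists h ∈ G with h⁻¹g₁h = g₂, h⁻¹g₂h = g₂⁻¹g₁g₂ and h⁻¹g₃h = g₃. Then (hg₂⁻¹)² = 1 and h² = g₁g₂. -/
/-- Let `g₁ g₂ g₃` be elements of a group `G` with `g₁g₂g₃ = 1`, such that the only element of
`G` commuting with each of `g₁, g₂, g₃` is the identity. If `h ∈ G` conjugates `g₁` to `g₂`,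
`g₂` to `g₂⁻¹g₁g₂`, and fixes `g₃` under conjugation, then `(hg₂⁻¹)² = 1` and `h² = g₁g₂`. -/
theorem braid_pullback_identity {G : Type*} [Group G] (g₁ g₂ g₃ : G)
    (hprod : g₁ * g₂ * g₃ = 1)
    (hcent : ∀ x : G, x * g₁ = g₁ * x → x * g₂ = g₂ * x → x * g₃ = g₃ * x → x = 1)
    (h : G)
    (hc1 : h⁻¹ * g₁ * h = g₂)
    (hc2 : h⁻¹ * g₂ * h = g₂⁻¹ * g₁ * g₂)
    (hc3 : h⁻¹ * g₃ * h = g₃) :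
    (h * g₂⁻¹) ^ 2 = 1 ∧ h ^ 2 = g₁ * g₂ := by
  have hg3 : g₃ = g₂⁻¹ * g₁⁻¹ := by
    calc g₃ = g₂⁻¹ * g₁⁻¹ * (g₁ * g₂ * g₃) := by group
      _ = g₂⁻¹ * g₁⁻¹ * 1 := by rw [hprod]
      _ = g₂⁻¹ * g₁⁻¹ := mul_one _
  have f1 : ∀ z : G, g₁ * (h * z) = h * (g₂ * z) := by
    intro z
    have e : g₁ * h = h * g₂ := by
      calc g₁ * h = h * (h⁻¹ * g₁ * h) := by group
        _ = h * g₂ := by rw [hc1]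
    rw [← mul_assoc, e, mul_assoc]
  have f2 : ∀ z : G, g₂ * (h * z) = h * (g₂⁻¹ * (g₁ * (g₂ * z))) := by
    intro z
    have e : g₂ * h = h * (g₂⁻¹ * (g₁ * g₂)) := by
      calc g₂ * h = h * (h⁻¹ * g₂ * h) := by group
        _ = h * (g₂⁻¹ * g₁ * g₂) := by rw [hc2]
        _ = h * (g₂⁻¹ * (g₁ * g₂)) := by group
    calc g₂ * (h * z) = (g₂ * h) * z := by rw [mul_assoc]
      _ = (h * (g₂⁻¹ * (g₁ * g₂))) * z := by rw [e]
      _ = h * (g₂⁻¹ * (g₁ * (g₂ * z))) := by group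
  have hcinv : h⁻¹ * g₂⁻¹ * h = g₂⁻¹ * (g₁⁻¹ * g₂) := by
    calc h⁻¹ * g₂⁻¹ * h = (h⁻¹ * g₂ * h)⁻¹ := by group
      _ = (g₂⁻¹ * g₁ * g₂)⁻¹ := by rw [hc2]
      _ = g₂⁻¹ * (g₁⁻¹ * g₂) := by group
  have f2i : ∀ z : G, g₂⁻¹ * (h * z) = h * (g₂⁻¹ * (g₁⁻¹ * (g₂ * z))) := by
    intro z
    have e : g₂⁻¹ * h = h * (g₂⁻¹ * (g₁⁻¹ * g₂)) := by
      calc g₂⁻¹ * h = h * (h⁻¹ * g₂⁻¹ * h) := by group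
        _ = h * (g₂⁻¹ * (g₁⁻¹ * g₂)) := by rw [hcinv]
    calc g₂⁻¹ * (h * z) = (g₂⁻¹ * h) * z := by rw [mul_assoc]
      _ = (h * (g₂⁻¹ * (g₁⁻¹ * g₂))) * z := by rw [e]
      _ = h * (g₂⁻¹ * (g₁⁻¹ * (g₂ * z))) := by group
  have f3 : ∀ z : G, g₃ * (h * z) = h * (g₃ * z) := by
    intro z
    have e : g₃ * h = h * g₃ := by
      calc g₃ * h = h * (h⁻¹ * g₃ * h) := by group
        _ = h * g₃ := by rw [hc3]
    rw [← mul_assoc, e, mul_assoc]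
  have hc1inv : h⁻¹ * g₁⁻¹ * h = g₂⁻¹ := by
    calc h⁻¹ * g₁⁻¹ * h = (h⁻¹ * g₁ * h)⁻¹ := by group
      _ = g₂⁻¹ := by rw [hc1]
  have f1i : ∀ z : G, g₁⁻¹ * (h * z) = h * (g₂⁻¹ * z) := by
    intro z
    have e : g₁⁻¹ * h = h * g₂⁻¹ := by
      calc g₁⁻¹ * h = h * (h⁻¹ * g₁⁻¹ * h) := by group
        _ = h * g₂⁻¹ := by rw [hc1inv]
    rw [← mul_assoc, e, mul_assoc]
  have f1' : g₁ * h = h * g₂ := by simpa using f1 1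
  have f2' : g₂ * h = h * (g₂⁻¹ * (g₁ * g₂)) := by simpa [mul_assoc] using f2 1
  have f3' : g₃ * h = h * g₃ := by simpa using f3 1
  have f1i' : g₁⁻¹ * h = h * g₂⁻¹ := by simpa using f1i 1
  have f2i' : g₂⁻¹ * h = h * (g₂⁻¹ * (g₁⁻¹ * g₂)) := by simpa [mul_assoc] using f2i 1
  have key : h ^ 2 = g₁ * g₂ := by
    have hx := hcent (h * (h * (g₂⁻¹ * g₁⁻¹))) ?_ ?_ ?_
    · have : h * h = g₁ * g₂ := by
        calc h * h = (h * (h * (g₂⁻¹ * g₁⁻¹))) * (g₁ * g₂) := by group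
          _ = 1 * (g₁ * g₂) := by rw [hx]
          _ = g₁ * g₂ := one_mul _
      rw [sq, this]
    · simp only [mul_assoc, f1, f2, f3, f2i, f1i, f1', f2', f3', f1i', f2i', hg3, inv_mul_cancel_left, mul_inv_cancel_left,
        inv_mul_cancel, mul_inv_cancel, mul_one, one_mul]
    · simp only [mul_assoc, f1, f2, f3, f2i, f1i, f1', f2', f3', f1i', f2i', hg3, inv_mul_cancel_left, mul_inv_cancel_left,
        inv_mul_cancel, mul_inv_cancel, mul_one, one_mul]
    · simp only [mul_assoc, f1, f2, f3, f2i, f1i, f1', f2', f3', f1i', f2i', hg3, inv_mul_cancel_left, mul_inv_cancel_left,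
        inv_mul_cancel, mul_inv_cancel, mul_one, one_mul]
  refine ⟨?_, key⟩
  have hk : h * h = g₁ * g₂ := by rw [← sq, key]
  have : h * g₂⁻¹ * (h * g₂⁻¹) = 1 := by
    calc h * g₂⁻¹ * (h * g₂⁻¹) = h * (g₂⁻¹ * (h * g₂⁻¹)) := by group
      _ = h * (h * (g₂⁻¹ * (g₁⁻¹ * (g₂ * g₂⁻¹)))) := by rw [f2i]
      _ = (h * h) * (g₂⁻¹ * g₁⁻¹) := by group
      _ = (g₁ * g₂) * (g₂⁻¹ * g₁⁻¹) := by rw [hk]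
      _ = 1 := by group
  rw [sq, this]
end

section
/- Let V be a 4-dimensional ℂ-vector space and let f be an endomorphism of V whose matrix in some basis of V is the block-diagonal Jordan matrix diag(J(1,2), J(1,1), J(1,1)). Then there is a basis of the 6-dimensional space ⋀²V in which the induced endomorphism ⋀²f has matrix diag(J(1,2), J(1,2), J(1,1), J(1,1)). -/
/-- The `n × n` Jordan block with eigenvalue `lam`: every diagonal entry is `lam` and every
entry directly above the diagonal is `1`. -/
def jordanBlock (lam : ℂ) (n : ℕ) : Matrix (Fin n) (Fin n) ℂ :=
  Matrix.of fun i j : Fin n =>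
    if (j : ℕ) = (i : ℕ) then lam else if (j : ℕ) = (i : ℕ) + 1 then 1 else 0

/-- The wedge `v ∧ w` as an element of the second exterior power `⋀[ℂ]^2 V`. -/
def wedge {V : Type*} [AddCommGroup V] [Module ℂ V] (v w : V) : ⋀[ℂ]^2 V :=
  ⟨ExteriorAlgebra.ι ℂ v * ExteriorAlgebra.ι ℂ w, by
    show _ ∈ LinearMap.range (ExteriorAlgebra.ι ℂ (M := V)) ^ 2
    rw [pow_two]
    exact Submodule.mul_mem_mul (LinearMap.mem_range_self _ v) (LinearMap.mem_range_self _ w)⟩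

/-! Write `e₁, e₂, e₃, e₄` for the basis `B`, so that `f e₁ = e₁`, `f e₂ = e₁ + e₂`,
`f e₃ = e₃`, `f e₄ = e₄`. Then `⋀²f` sends `e₂ ∧ eₖ` to `e₁ ∧ eₖ + e₂ ∧ eₖ` and fixes `e₁ ∧ eₖ`
for `k = 3, 4`, fixes `e₃ ∧ e₄`, and fixes `e₁ ∧ e₂` because `e₁ ∧ e₁ = 0`. So the six wedges
`eᵢ ∧ eⱼ` (`i < j`), ordered as the Jordan chains `(e₁ ∧ e₃, e₂ ∧ e₃)`, `(e₁ ∧ e₄, e₂ ∧ e₄)`,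
`(e₁ ∧ e₂)`, `(e₃ ∧ e₄)`, form the required basis: they span `⋀²V`, and there are
`6 = (4 choose 2)` of them. -/

open Module

namespace LinearMap

section Semiring

variable {R M ι κ : Type*} [Semiring R] [AddCommMonoid M] [Module R M] [Fintype ι] [Fintype κ]

def HasMatrix (g : M →ₗ[R] M) (c : ι → M) (A : Matrix ι ι R) : Prop :=
  ∀ j, g (c j) = ∑ i, A i j • c i

theorem hasMatrix_fromBlocks_iff (g : M →ₗ[R] M) (c : ι ⊕ κ → M) (A : Matrix ι ι R)
    (D : Matrix κ κ R) :
    g.HasMatrix c (Matrix.fromBlocks A 0 0 D) ↔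
      g.HasMatrix (c ∘ Sum.inl) A ∧ g.HasMatrix (c ∘ Sum.inr) D := by
  simp [HasMatrix, Sum.forall, Fintype.sum_sum_type]

end Semiring

theorem toMatrix_eq_iff_hasMatrix {R M ι : Type*} [CommSemiring R] [AddCommMonoid M]
    [Module R M] [Fintype ι] [DecidableEq ι] (C : Basis ι R M) (g : M →ₗ[R] M)
    (A : Matrix ι ι R) : toMatrix C C g = A ↔ g.HasMatrix C A := by
  rw [← (toMatrix C C).symm.injective.eq_iff, LinearEquiv.symm_apply_apply, toMatrix_symm]
  exact ⟨fun h j => by rw [h, Matrix.toLin_self],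
    fun h => C.ext fun j => by rw [h, Matrix.toLin_self]⟩

section JordanBlock

variable {M : Type*} [AddCommMonoid M] [Module ℂ M] (g : M →ₗ[ℂ] M) (lam : ℂ)

theorem hasMatrix_jordanBlock_one_iff (c : Fin 1 → M) :
    g.HasMatrix c (jordanBlock lam 1) ↔ g (c 0) = lam • c 0 := by
  simp [HasMatrix, jordanBlock]

theorem hasMatrix_jordanBlock_two_iff (c : Fin 2 → M) :
    g.HasMatrix c (jordanBlock lam 2) ↔ g (c 0) = lam • c 0 ∧ g (c 1) = c 0 + lam • c 1 := by
  simp [HasMatrix, jordanBlock, Fin.forall_fin_two, Fin.sum_univ_two]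

end JordanBlock

end LinearMap

section Wedge

variable {V : Type*} [AddCommGroup V] [Module ℂ V]

theorem wedge_add_left (v v' w : V) : wedge (v + v') w = wedge v w + wedge v' w := by
  ext; simp [wedge, add_mul]

theorem wedge_add_right (v w w' : V) : wedge v (w + w') = wedge v w + wedge v w' := by
  ext; simp [wedge, mul_add]

@[simp]
theorem wedge_self (v : V) : wedge v v = 0 := by
  ext; simp [wedge]

theorem wedge_swap (v w : V) : wedge w v = -wedge v w := by
  ext
  exact eq_neg_of_add_eq_zero_right (ExteriorAlgebra.ι_add_mul_swap v w)

theorem wedge_swap_mem_iff (S : Submodule ℂ (⋀[ℂ]^2 V)) (v w : V) :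
    wedge w v ∈ S ↔ wedge v w ∈ S := by
  rw [wedge_swap, Submodule.neg_mem_iff]

theorem wedge_eq_ιMulti (v w : V) : wedge v w = exteriorPower.ιMulti ℂ 2 ![v, w] := by
  ext; simp [wedge, ExteriorAlgebra.ιMulti_apply]

theorem span_range_wedge_basis {I : Type*} (b : Basis I ℂ V) :
    Submodule.span ℂ (Set.range fun p : I × I => wedge (b p.1) (b p.2)) = ⊤ := by
  rw [eq_top_iff, ← exteriorPower.ιMulti_span_of_span ℂ 2 V b.span_eq, Submodule.span_le]
  rintro - ⟨a, ha, rfl⟩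
  obtain ⟨i, hi⟩ := ha (Set.mem_range_self 0)
  obtain ⟨j, hj⟩ := ha (Set.mem_range_self 1)
  refine Submodule.subset_span ⟨(i, j), ?_⟩
  simp only [wedge_eq_ιMulti, hi, hj]
  congr 1
  ext k; fin_cases k <;> rfl

end Wedge

section JordanWedge

variable {V : Type*} [AddCommGroup V] [Module ℂ V]

noncomputable def jordanWedges (b : Basis (Fin 2 ⊕ (Fin 1 ⊕ Fin 1)) ℂ V) :
    Fin 2 ⊕ (Fin 2 ⊕ (Fin 1 ⊕ Fin 1)) → ⋀[ℂ]^2 V :=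
  Sum.elim ![wedge (b (.inl 0)) (b (.inr (.inl 0))), wedge (b (.inl 1)) (b (.inr (.inl 0)))]
    (Sum.elim ![wedge (b (.inl 0)) (b (.inr (.inr 0))), wedge (b (.inl 1)) (b (.inr (.inr 0)))]
      (Sum.elim ![wedge (b (.inl 0)) (b (.inl 1))] ![wedge (b (.inr (.inl 0))) (b (.inr (.inr 0)))]))

theorem top_le_span_range_jordanWedges (b : Basis (Fin 2 ⊕ (Fin 1 ⊕ Fin 1)) ℂ V) :
    ⊤ ≤ Submodule.span ℂ (Set.range (jordanWedges b)) := by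
  rw [← span_range_wedge_basis b, Submodule.span_le]
  rintro - ⟨⟨k | k | k, l | l | l⟩, rfl⟩ <;> fin_cases k <;> fin_cases l <;>
    rw [SetLike.mem_coe] <;>
    first
    | (simp only [wedge_self, Submodule.zero_mem]; done)
    | (apply Submodule.subset_span; simp [jordanWedges]; done)
    | (rw [wedge_swap_mem_iff]; apply Submodule.subset_span; simp [jordanWedges])

theorem card_eq_finrank_jordanWedges (b : Basis (Fin 2 ⊕ (Fin 1 ⊕ Fin 1)) ℂ V) :
    Fintype.card (Fin 2 ⊕ (Fin 2 ⊕ (Fin 1 ⊕ Fin 1))) = finrank ℂ (⋀[ℂ]^2 V) := by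
  have := Module.Finite.of_basis b
  rw [exteriorPower.finrank_eq, finrank_eq_card_basis b]
  rfl

noncomputable def jordanWedgeBasis (b : Basis (Fin 2 ⊕ (Fin 1 ⊕ Fin 1)) ℂ V) :
    Basis (Fin 2 ⊕ (Fin 2 ⊕ (Fin 1 ⊕ Fin 1))) ℂ (⋀[ℂ]^2 V) :=
  basisOfTopLeSpanOfCardEqFinrank (jordanWedges b) (top_le_span_range_jordanWedges b)
    (card_eq_finrank_jordanWedges b)

end JordanWedge

open LinearMap in
theorem exterior_square_jordan_J2_J1_J1_general (V : Type*) [AddCommGroup V] [Module ℂ V]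
    (f : V →ₗ[ℂ] V)
    (B : Module.Basis (Fin 2 ⊕ (Fin 1 ⊕ Fin 1)) ℂ V)
    (hB : LinearMap.toMatrix B B f = Matrix.fromBlocks (jordanBlock 1 2) 0 0 (Matrix.fromBlocks (jordanBlock 1 1) 0 0 (jordanBlock 1 1)))
    (g : (⋀[ℂ]^2 V) →ₗ[ℂ] (⋀[ℂ]^2 V))
    (hg : ∀ v w : V, g (wedge v w) = wedge (f v) (f w)) :
    ∃ C : Module.Basis (Fin 2 ⊕ (Fin 2 ⊕ (Fin 1 ⊕ Fin 1))) ℂ (⋀[ℂ]^2 V),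
      LinearMap.toMatrix C C g = Matrix.fromBlocks (jordanBlock 1 2) 0 0 (Matrix.fromBlocks (jordanBlock 1 2) 0 0 (Matrix.fromBlocks (jordanBlock 1 1) 0 0 (jordanBlock 1 1))) := by
  classical
  obtain ⟨⟨hf₁, hf₂⟩, hf₃, hf₄⟩ :
      (f (B (.inl 0)) = B (.inl 0) ∧ f (B (.inl 1)) = B (.inl 0) + B (.inl 1)) ∧
        f (B (.inr (.inl 0))) = B (.inr (.inl 0)) ∧ f (B (.inr (.inr 0))) = B (.inr (.inr 0)) := by
    simpa [toMatrix_eq_iff_hasMatrix, hasMatrix_fromBlocks_iff, hasMatrix_jordanBlock_one_iff,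
      hasMatrix_jordanBlock_two_iff] using hB
  refine ⟨jordanWedgeBasis B, ?_⟩
  simp [toMatrix_eq_iff_hasMatrix, hasMatrix_fromBlocks_iff, hasMatrix_jordanBlock_one_iff,
    hasMatrix_jordanBlock_two_iff, jordanWedgeBasis, jordanWedges, hg, hf₁, hf₂, hf₃, hf₄,
    wedge_add_left, wedge_add_right]

/-- If the matrix of the endomorphism `f` of the 4-dimensional ℂ-vector space `V` in some basis is diag(J(1,2), J(1,1), J(1,1)), then in some basis of the 6-dimensional space ⋀²V the induced endomorphism ⋀²f (characterized by `v ∧ w ↦ f v ∧ f w`) has matrix diag(J(1,2), J(1,2), J(1,1), J(1,1)). -/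
theorem exterior_square_jordan_J2_J1_J1 (V : Type*) [AddCommGroup V] [Module ℂ V]
    (hdim : Module.finrank ℂ V = 4)
    (f : V →ₗ[ℂ] V)
    (B : Module.Basis (Fin 2 ⊕ (Fin 1 ⊕ Fin 1)) ℂ V)
    (hB : LinearMap.toMatrix B B f = Matrix.fromBlocks (jordanBlock 1 2) 0 0 (Matrix.fromBlocks (jordanBlock 1 1) 0 0 (jordanBlock 1 1)))
    (g : (⋀[ℂ]^2 V) →ₗ[ℂ] (⋀[ℂ]^2 V))
    (hg : ∀ v w : V, g (wedge v w) = wedge (f v) (f w)) :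
    ∃ C : Module.Basis (Fin 2 ⊕ (Fin 2 ⊕ (Fin 1 ⊕ Fin 1))) ℂ (⋀[ℂ]^2 V),
      LinearMap.toMatrix C C g = Matrix.fromBlocks (jordanBlock 1 2) 0 0 (Matrix.fromBlocks (jordanBlock 1 2) 0 0 (Matrix.fromBlocks (jordanBlock 1 1) 0 0 (jordanBlock 1 1))) :=
  exterior_square_jordan_J2_J1_J1_general V f B hB g hg
end
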